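/- Let H be a real Hilbert space, f : H → ℝ strongly quasiconvex with value γ > 0 with minimizer x*, let c > 0 and (c_k) a sequence of reals with c_k ≥ c for all k, and let (x^k) be a sequence in H with x^{k+1} ∈ Prox_{c_k f}(x^k) for all k ∈ ℕ. Let b ≥ ‖x^0 − x*‖². Then for every ε > 0 there exists k ≤ ⌈b/ε⌉ such that ‖x^k − x^{k+1}‖² < ε. -/

import Mathlib

/-!
Strong quasiconvexity makes every proximal step satisfy `⟪x_{k+1} - x_k, x* - x_{k+1}⟫ ≥ 0`,
i.e. `‖x_{k+1} - x*‖² + ‖x_k - x_{k+1}‖² ≤ ‖x_k - x*‖²`. Telescoping bounds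
`∑ ‖x_k - x_{k+1}‖²` by `‖x_0 - x*‖² ≤ b`, so the first `⌈b / ε⌉ + 1` terms cannot all be
at least `ε`.
-/

open Finset RealInnerProductSpace

section ProximalPoint

variable {H : Type*} [NormedAddCommGroup H] [InnerProductSpace ℝ H]

def IsStronglyQuasiconvex (γ : ℝ) (f : H → ℝ) : Prop :=
  ∀ x y : H, ∀ t ∈ Set.Icc (0 : ℝ) 1,
    f ((1 - t) • x + t • y) ≤ max (f x) (f y) - t * (1 - t) * (γ / 2) * ‖x - y‖ ^ 2

/-- `p ∈ Prox_{βf}(x)`. -/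
def IsProxPoint (β : ℝ) (f : H → ℝ) (x p : H) : Prop :=
  ∀ y : H, f p + (1 / (2 * β)) * ‖p - x‖ ^ 2 ≤ f y + (1 / (2 * β)) * ‖y - x‖ ^ 2

lemma norm_lineMap_sub_sq (x p z : H) (t : ℝ) :
    ‖(1 - t) • p + t • z - x‖ ^ 2
      = ‖p - x‖ ^ 2 + 2 * t * ⟪p - x, z - p⟫ + t ^ 2 * ‖p - z‖ ^ 2 := by
  have : (1 - t) • p + t • z - x = (p - x) + t • (z - p) := by module
  rw [this, norm_add_sq_real, real_inner_smul_right, norm_smul, norm_sub_rev z p,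
    Real.norm_eq_abs, mul_pow, sq_abs]
  ring

/-- Testing the prox inequality at the point of `[p, z]` with parameter `t = βγ / (1 + βγ)`
makes the strong-quasiconvexity gain cancel the quadratic term exactly. -/
lemma IsProxPoint.inner_sub_nonneg {γ β : ℝ} {f : H → ℝ} {x p z : H}
    (hf : IsStronglyQuasiconvex γ f) (hγ : 0 < γ) (hβ : 0 < β) (hp : IsProxPoint β f x p)
    (hz : f z ≤ f p) : 0 ≤ ⟪p - x, z - p⟫ := by
  have hβγ : 0 < β * γ := mul_pos hβ hγ
  set t := β * γ / (1 + β * γ) with ht_def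
  have ht_pos : 0 < t := by positivity
  have ht_le : t ≤ 1 := by rw [div_le_one (by positivity)]; linarith
  have ht_eq : β * γ * (1 - t) = t := by rw [ht_def]; field_simp; ring
  have hgain := hf p z t ⟨ht_pos.le, ht_le⟩
  rw [max_eq_left hz] at hgain
  have hprox := hp ((1 - t) • p + t • z)
  rw [norm_lineMap_sub_sq] at hprox
  have hdecrease : t * (1 - t) * (γ / 2) * ‖p - z‖ ^ 2
      ≤ 1 / (2 * β) * (2 * t * ⟪p - x, z - p⟫ + t ^ 2 * ‖p - z‖ ^ 2) := by
    linarith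
  have hscaled := mul_le_mul_of_nonneg_left hdecrease (by positivity : 0 ≤ 2 * β)
  rw [show 2 * β * (t * (1 - t) * (γ / 2) * ‖p - z‖ ^ 2) = t * (β * γ * (1 - t)) * ‖p - z‖ ^ 2
    by ring, ht_eq, ← mul_assoc, mul_one_div_cancel (by positivity), one_mul] at hscaled
  have key : 0 ≤ t * ⟪p - x, z - p⟫ := by linarith
  exact nonneg_of_mul_nonneg_right key ht_pos

lemma norm_sub_sq_add_norm_sub_sq_le_of_inner_nonneg {x p z : H} (h : 0 ≤ ⟪p - x, z - p⟫) :
    ‖p - z‖ ^ 2 + ‖x - p‖ ^ 2 ≤ ‖x - z‖ ^ 2 := by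
  have hsplit := norm_add_sq_real (x - p) (p - z)
  rw [sub_add_sub_cancel] at hsplit
  have hflip : ⟪x - p, p - z⟫ = ⟪p - x, z - p⟫ := by
    rw [← inner_neg_neg, neg_sub, neg_sub]
  linarith

lemma IsProxPoint.norm_sub_sq_add_norm_sub_sq_le {γ β : ℝ} {f : H → ℝ} {x p z : H}
    (hf : IsStronglyQuasiconvex γ f) (hγ : 0 < γ) (hβ : 0 < β) (hp : IsProxPoint β f x p)
    (hz : f z ≤ f p) : ‖p - z‖ ^ 2 + ‖x - p‖ ^ 2 ≤ ‖x - z‖ ^ 2 :=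
  norm_sub_sq_add_norm_sub_sq_le_of_inner_nonneg (hp.inner_sub_nonneg hf hγ hβ hz)

end ProximalPoint

lemma sum_range_add_le_of_forall_add_le {a d : ℕ → ℝ} (h : ∀ k, d (k + 1) + a k ≤ d k) (n : ℕ) :
    ∑ k ∈ range n, a k + d n ≤ d 0 := by
  have hsum : ∑ k ∈ range n, a k ≤ ∑ k ∈ range n, (d k - d (k + 1)) :=
    sum_le_sum fun k _ => by linarith [h k]
  rw [sum_range_sub'] at hsum
  linarith

lemma exists_le_natCeil_lt_of_sum_range_le {a : ℕ → ℝ} {b ε : ℝ}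
    (h : ∀ n, ∑ k ∈ range n, a k ≤ b) (hε : 0 < ε) : ∃ k ≤ ⌈b / ε⌉₊, a k < ε := by
  by_contra! hlarge
  set N := ⌈b / ε⌉₊
  have hsum : (N + 1 : ℝ) * ε ≤ ∑ k ∈ range (N + 1), a k := by
    simpa [mul_comm] using card_nsmul_le_sum (range (N + 1)) a ε fun k hk =>
      hlarge k (Nat.lt_succ_iff.mp (mem_range.mp hk))
  have hN : b ≤ N * ε := (div_le_iff₀ hε).mp (Nat.le_ceil _)
  linarith [h (N + 1)]

theorem ppa_quantitative_asymptotic_regularity_general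
    {H : Type*} [NormedAddCommGroup H] [InnerProductSpace ℝ H]
    (f : H → ℝ) (γ : ℝ) (hγ : 0 < γ)
    (hf : ∀ x y : H, ∀ t ∈ Set.Icc (0 : ℝ) 1,
      f ((1 - t) • x + t • y) ≤ max (f x) (f y) - t * (1 - t) * (γ / 2) * ‖x - y‖ ^ 2)
    (xs : H) (hxs : ∀ y : H, f xs ≤ f y)
    (c : ℝ) (hc : 0 < c) (ck : ℕ → ℝ) (hck : ∀ k, c ≤ ck k)
    (x : ℕ → H)
    (hx : ∀ k : ℕ, ∀ y : H,
      f (x (k + 1)) + (1 / (2 * ck k)) * ‖x (k + 1) - x k‖ ^ 2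
        ≤ f y + (1 / (2 * ck k)) * ‖y - x k‖ ^ 2)
    (b : ℝ) (hb : ‖x 0 - xs‖ ^ 2 ≤ b) :
    ∀ ε > (0 : ℝ), ∃ k ≤ ⌈b / ε⌉₊, ‖x k - x (k + 1)‖ ^ 2 < ε := by
  intro ε hε
  have hfejer : ∀ k, ‖x (k + 1) - xs‖ ^ 2 + ‖x k - x (k + 1)‖ ^ 2 ≤ ‖x k - xs‖ ^ 2 := fun k =>
    IsProxPoint.norm_sub_sq_add_norm_sub_sq_le hf hγ (hc.trans_le (hck k)) (hx k) (hxs _)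
  refine exists_le_natCeil_lt_of_sum_range_le (fun n => ?_) hε
  linarith [sum_range_add_le_of_forall_add_le (a := fun k => ‖x k - x (k + 1)‖ ^ 2)
    (d := fun k => ‖x k - xs‖ ^ 2) hfejer n, sq_nonneg ‖x n - xs‖]

/-- Quantitative asymptotic regularity of the proximal point
algorithm for strongly quasiconvex functions. -/
theorem ppa_quantitative_asymptotic_regularity
    {H : Type*} [NormedAddCommGroup H] [InnerProductSpace ℝ H] [CompleteSpace H]
    (f : H → ℝ) (γ : ℝ) (hγ : 0 < γ)
    (hf : ∀ x y : H, ∀ t ∈ Set.Icc (0 : ℝ) 1,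
      f ((1 - t) • x + t • y) ≤ max (f x) (f y) - t * (1 - t) * (γ / 2) * ‖x - y‖ ^ 2)
    (xs : H) (hxs : ∀ y : H, f xs ≤ f y)
    (c : ℝ) (hc : 0 < c) (ck : ℕ → ℝ) (hck : ∀ k, c ≤ ck k)
    (x : ℕ → H)
    (hx : ∀ k : ℕ, ∀ y : H,
      f (x (k + 1)) + (1 / (2 * ck k)) * ‖x (k + 1) - x k‖ ^ 2
        ≤ f y + (1 / (2 * ck k)) * ‖y - x k‖ ^ 2)
    (b : ℝ) (hb : ‖x 0 - xs‖ ^ 2 ≤ b) :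
    ∀ ε > (0 : ℝ), ∃ k ≤ ⌈b / ε⌉₊, ‖x k - x (k + 1)‖ ^ 2 < ε :=
  ppa_quantitative_asymptotic_regularity_general f γ hγ hf xs hxs c hc ck hck x hx b hb
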